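/- arXiv:q-alg/9703019 — 2 statements merged into one kernel-verified Lean document; each statement's English description precedes it below -/
import Mathlib

section
/- The canonical Nambu 3-bracket on ℝ³ (the Jacobian determinant) satisfies the Fundamental Identity: {{g,h,f₁},f₂,f₃} + {f₁,{g,h,f₂},f₃} + {f₁,f₂,{g,h,f₃}} = {g,h,{f₁,f₂,f₃}} for all smooth functions g,h,f₁,f₂,f₃ on ℝ³. -/
noncomputable section

/-- The canonical Nambu 3-bracket on ℝ³: the Jacobian determinant of three functions. -/
def nambu (f : Fin 3 → ((Fin 3 → ℝ) → ℝ)) : (Fin 3 → ℝ) → ℝ :=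
  fun x => Matrix.det (Matrix.of fun i j => fderiv ℝ (f i) x (Pi.single j 1))

/-- Partial derivative in direction `i`. -/
def P (i : Fin 3) (f : (Fin 3 → ℝ) → ℝ) : (Fin 3 → ℝ) → ℝ :=
  fun y => fderiv ℝ f y (Pi.single i 1)

lemma contDiff_P {f : (Fin 3 → ℝ) → ℝ} (hf : ContDiff ℝ (⊤ : ℕ∞) f) (i : Fin 3) :
    ContDiff ℝ (⊤ : ℕ∞) (P i f) := by
  have h1 : ContDiff ℝ (⊤ : ℕ∞) (fderiv ℝ f) := hf.fderiv_right (by simp)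
  exact h1.clm_apply contDiff_const

lemma P_comm {f : (Fin 3 → ℝ) → ℝ} (hf : ContDiff ℝ (⊤ : ℕ∞) f) (i j : Fin 3) (x : Fin 3 → ℝ) :
    P i (P j f) x = P j (P i f) x := by
  have hsym : IsSymmSndFDerivAt ℝ f x := hf.contDiffAt.isSymmSndFDerivAt (by rw [minSmoothness_of_isRCLikeNormedField]; exact WithTop.coe_le_coe.mpr (le_top : (2:ℕ∞) ≤ ⊤))
  have hdf : ContDiff ℝ (⊤ : ℕ∞) (fderiv ℝ f) := hf.fderiv_right (by simp)
  have key : ∀ a b : Fin 3, P a (P b f) x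
      = fderiv ℝ (fderiv ℝ f) x (Pi.single a 1) (Pi.single b 1) := by
    intro a b
    have h1 : fderiv ℝ (fun y => (fderiv ℝ f y) (Pi.single b (1:ℝ))) x
        = ((fderiv ℝ f x).comp (fderiv ℝ (fun _ => Pi.single b (1:ℝ)) x))
          + (fderiv ℝ (fderiv ℝ f) x).flip (Pi.single b 1) :=
      fderiv_clm_apply (hdf.differentiable (by simp) x) (differentiableAt_const _)
    have h2 : P a (P b f) x
        = (fderiv ℝ (fun y => (fderiv ℝ f y) (Pi.single b (1:ℝ))) x) (Pi.single a 1) := rfl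
    rw [h2, h1]
    simp
  rw [key, key, hsym]

lemma nambu_apply (a b c : (Fin 3 → ℝ) → ℝ) (x : Fin 3 → ℝ) :
    nambu ![a, b, c] x =
      P 0 a x * P 1 b x * P 2 c x - P 0 a x * P 2 b x * P 1 c x
        - P 1 a x * P 0 b x * P 2 c x + P 1 a x * P 2 b x * P 0 c x
        + P 2 a x * P 0 b x * P 1 c x - P 2 a x * P 1 b x * P 0 c x := by
  simp only [nambu, Matrix.det_fin_three, Matrix.of_apply, Matrix.cons_val', Matrix.cons_val_zero,
    Matrix.cons_val_one, Matrix.head_cons, Matrix.cons_val_two, Matrix.tail_cons, Matrix.empty_val',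
    Matrix.cons_val_fin_one, Matrix.head_fin_const]
  rfl

lemma P_nambu {a b c : (Fin 3 → ℝ) → ℝ} (ha : ContDiff ℝ (⊤ : ℕ∞) a) (hb : ContDiff ℝ (⊤ : ℕ∞) b)
    (hc : ContDiff ℝ (⊤ : ℕ∞) c) (j : Fin 3) (x : Fin 3 → ℝ) :
    P j (nambu ![a, b, c]) x =
      P j (P 0 a) x * P 1 b x * P 2 c x
         + P 0 a x * P j (P 1 b) x * P 2 c x
         + P 0 a x * P 1 b x * P j (P 2 c) x
         - P j (P 0 a) x * P 2 b x * P 1 c x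
         - P 0 a x * P j (P 2 b) x * P 1 c x
         - P 0 a x * P 2 b x * P j (P 1 c) x
         - P j (P 1 a) x * P 0 b x * P 2 c x
         - P 1 a x * P j (P 0 b) x * P 2 c x
         - P 1 a x * P 0 b x * P j (P 2 c) x
         + P j (P 1 a) x * P 2 b x * P 0 c x
         + P 1 a x * P j (P 2 b) x * P 0 c x
         + P 1 a x * P 2 b x * P j (P 0 c) x
         + P j (P 2 a) x * P 0 b x * P 1 c x
         + P 2 a x * P j (P 0 b) x * P 1 c x
         + P 2 a x * P 0 b x * P j (P 1 c) x
         - P j (P 2 a) x * P 1 b x * P 0 c x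
         - P 2 a x * P j (P 1 b) x * P 0 c x
         - P 2 a x * P 1 b x * P j (P 0 c) x := by
  have da : ∀ i x, DifferentiableAt ℝ (P i a) x := fun i x => ((contDiff_P ha i).differentiable (by simp) x)
  have db : ∀ i x, DifferentiableAt ℝ (P i b) x := fun i x => ((contDiff_P hb i).differentiable (by simp) x)
  have dc : ∀ i x, DifferentiableAt ℝ (P i c) x := fun i x => ((contDiff_P hc i).differentiable (by simp) x)
  have e : nambu ![a, b, c] = fun y =>
      P 0 a y * P 1 b y * P 2 c y - P 0 a y * P 2 b y * P 1 c y
        - P 1 a y * P 0 b y * P 2 c y + P 1 a y * P 2 b y * P 0 c y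
        + P 2 a y * P 0 b y * P 1 c y - P 2 a y * P 1 b y * P 0 c y :=
    funext fun y => nambu_apply a b c y
  have H := ((((((((da 0 x).hasFDerivAt.mul ((db 1 x).hasFDerivAt)).mul ((dc 2 x).hasFDerivAt)).sub
      ((((da 0 x).hasFDerivAt.mul ((db 2 x).hasFDerivAt)).mul ((dc 1 x).hasFDerivAt)))).sub
      ((((da 1 x).hasFDerivAt.mul ((db 0 x).hasFDerivAt)).mul ((dc 2 x).hasFDerivAt)))).add
      ((((da 1 x).hasFDerivAt.mul ((db 2 x).hasFDerivAt)).mul ((dc 0 x).hasFDerivAt)))).add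
      ((((da 2 x).hasFDerivAt.mul ((db 0 x).hasFDerivAt)).mul ((dc 1 x).hasFDerivAt)))).sub
      ((((da 2 x).hasFDerivAt.mul ((db 1 x).hasFDerivAt)).mul ((dc 0 x).hasFDerivAt))))
  have hP : P j (nambu ![a, b, c]) x
      = fderiv ℝ (nambu ![a, b, c]) x (Pi.single j 1) := rfl
  rw [hP, e]
  erw [H.fderiv]
  show _ = _
  simp only [ContinuousLinearMap.coe_sub', ContinuousLinearMap.coe_add', Pi.sub_apply,
    Pi.add_apply, ContinuousLinearMap.add_apply, ContinuousLinearMap.coe_smul', Pi.smul_apply,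
    smul_eq_mul, Pi.mul_apply]
  have rP : ∀ (i i2 : Fin 3) (F : (Fin 3 → ℝ) → ℝ),
      fderiv ℝ (P i2 F) x (Pi.single i 1) = P i (P i2 F) x := fun _ _ _ => rfl
  simp only [rP]
  ring

/-- The Fundamental Identity for the canonical Nambu 3-bracket on ℝ³. -/
theorem nambu_fundamental_identity (g h f₁ f₂ f₃ : (Fin 3 → ℝ) → ℝ)
    (hg : ContDiff ℝ (⊤ : ℕ∞) g) (hh : ContDiff ℝ (⊤ : ℕ∞) h) (h₁ : ContDiff ℝ (⊤ : ℕ∞) f₁)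
    (h₂ : ContDiff ℝ (⊤ : ℕ∞) f₂) (h₃ : ContDiff ℝ (⊤ : ℕ∞) f₃) (x : Fin 3 → ℝ) :
    nambu ![nambu ![g, h, f₁], f₂, f₃] x
      + nambu ![f₁, nambu ![g, h, f₂], f₃] x
      + nambu ![f₁, f₂, nambu ![g, h, f₃]] x
      = nambu ![g, h, nambu ![f₁, f₂, f₃]] x := by
  simp only [nambu_apply, P_nambu hg hh h₁, P_nambu hg hh h₂, P_nambu hg hh h₃,
    P_nambu h₁ h₂ h₃,
    P_comm hg 1 0, P_comm hg 2 0, P_comm hg 2 1,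
    P_comm hh 1 0, P_comm hh 2 0, P_comm hh 2 1,
    P_comm h₁ 1 0, P_comm h₁ 2 0, P_comm h₁ 2 1,
    P_comm h₂ 1 0, P_comm h₂ 2 0, P_comm h₂ 2 1,
    P_comm h₃ 1 0, P_comm h₃ 2 0, P_comm h₃ 2 1]
  ring
end
end

section
/- Define the sun product on monomials of ℝ[q,p][ν] by (q^{j₁}p^{k₁}) ⊙ (q^{j₂}p^{k₂}) = q^{j₁+j₂} ∗_M p^{k₁+k₂}, where ∗_M is the Moyal product on ℝ², extended bilinearly with the convention that it annihilates nonzero powers of ν. Then ⊙ is commutative and associative. -/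
noncomputable section

open MvPolynomial

/-- Polynomials ℝ[q,p], with `q = X 0` and `p = X 1`. -/
abbrev N : Type := MvPolynomial (Fin 2) ℝ

/-- The `r`-th power of the Poisson bidifferential operator
`P(f,g) = ∂f/∂p ∂g/∂q − ∂f/∂q ∂g/∂p` on ℝ²: a choice `c t = true` contributes
`∂/∂p` on the left and `∂/∂q` on the right with sign `+1`, and `c t = false`
the opposite, with sign `−1`. -/
def Pr (r : ℕ) (f g : N) : N :=
  ∑ c : Fin r → Bool,
    (∏ t : Fin r, (if c t then (1 : ℝ) else -1)) •
      (((List.ofFn fun t => if c t then (1 : Fin 2) else 0).foldr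
          (fun i h => pderiv i h) f)
        * ((List.ofFn fun t => if c t then (0 : Fin 2) else 1).foldr
          (fun i h => pderiv i h) g))

/-- The Moyal product `f ∗_M g = Σ_r (ν^r/r!) P^r(f,g)` as a power series in `ν`. -/
def moyal (f g : N) : PowerSeries N :=
  PowerSeries.mk fun r => ((r.factorial : ℝ)⁻¹) • Pr r f g

/-- The sun product on `ℝ[q,p]`, defined on monomials by
`(q^{j₁}p^{k₁}) ⊙ (q^{j₂}p^{k₂}) = q^{j₁+j₂} ∗_M p^{k₁+k₂}` and extended
ℝ-bilinearly. -/
def sun0 (f g : N) : PowerSeries N :=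
  ∑ a ∈ f.support, ∑ b ∈ g.support,
    (MvPolynomial.coeff a f * MvPolynomial.coeff b g) •
      moyal ((X 0 : N) ^ (a 0 + b 0)) ((X 1 : N) ^ (a 1 + b 1))

/-- The sun product on `ℝ[q,p][ν]`, annihilating nonzero powers of `ν`:
`A ⊙ B = A₀ ⊙ B₀`. -/
def sun (A B : PowerSeries N) : PowerSeries N :=
  sun0 (PowerSeries.constantCoeff (R := N) A) (PowerSeries.constantCoeff (R := N) B)

/-! The product `q^{j₁}p^{k₁} ⊙ q^{j₂}p^{k₂}` depends on the two monomials only through their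
product, so bilinearity gives `f ⊙ g = (f g) ⊙ 1`; moreover the `ν⁰`-term of `f ⊙ g` is `f g`.
Since `⊙` only sees `ν⁰`-terms, commutativity and associativity of `⊙` reduce to those of
polynomial multiplication. -/

lemma sun0_eq_sum_of_support_subset {f g : N} {s t : Finset (Fin 2 →₀ ℕ)}
    (hs : f.support ⊆ s) (ht : g.support ⊆ t) :
    sun0 f g = ∑ a ∈ s, ∑ b ∈ t, (coeff a f * coeff b g) •
      moyal ((X 0 : N) ^ (a 0 + b 0)) ((X 1 : N) ^ (a 1 + b 1)) := by
  refine Finset.sum_subset_zero_on_sdiff hs (fun a ha => ?_) fun a _ => ?_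
  · simp [notMem_support_iff.mp (Finset.mem_sdiff.mp ha).2]
  · refine Finset.sum_subset_zero_on_sdiff ht (fun b hb => ?_) fun b _ => rfl
    simp [notMem_support_iff.mp (Finset.mem_sdiff.mp hb).2]

lemma sun0_add_left (f g h : N) : sun0 (f + g) h = sun0 f h + sun0 g h := by
  rw [sun0_eq_sum_of_support_subset support_add subset_rfl,
    sun0_eq_sum_of_support_subset (Finset.subset_union_left (s₂ := g.support)) subset_rfl,
    sun0_eq_sum_of_support_subset (Finset.subset_union_right (s₁ := f.support)) subset_rfl]
  simp only [coeff_add, add_mul, add_smul, Finset.sum_add_distrib]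

lemma sun0_add_right (f g h : N) : sun0 f (g + h) = sun0 f g + sun0 f h := by
  rw [sun0_eq_sum_of_support_subset subset_rfl support_add,
    sun0_eq_sum_of_support_subset subset_rfl (Finset.subset_union_left (s₂ := h.support)),
    sun0_eq_sum_of_support_subset subset_rfl (Finset.subset_union_right (s₁ := g.support))]
  simp only [coeff_add, mul_add, add_smul, Finset.sum_add_distrib]

lemma sun0_monomial (a b : Fin 2 →₀ ℕ) (c d : ℝ) :
    sun0 (monomial a c) (monomial b d)
      = (c * d) • moyal ((X 0 : N) ^ (a 0 + b 0)) ((X 1 : N) ^ (a 1 + b 1)) := by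
  rw [sun0_eq_sum_of_support_subset (support_monomial_subset (s := a) (a := c))
    support_monomial_subset]
  simp [coeff_monomial]

lemma sun0_eq_sun0_mul_one (f g : N) : sun0 f g = sun0 (f * g) 1 := by
  induction f using MvPolynomial.induction_on' with
  | add f f' hf hf' => rw [sun0_add_left, hf, hf', add_mul, sun0_add_left]
  | monomial a c =>
    induction g using MvPolynomial.induction_on' with
    | add g g' hg hg' => rw [sun0_add_right, hg, hg', mul_add, sun0_add_left]
    | monomial b d =>
      rw [monomial_mul, ← C_1, ← monomial_zero', sun0_monomial, sun0_monomial]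
      simp

lemma constantCoeff_moyal (f g : N) :
    PowerSeries.constantCoeff (R := N) (moyal f g) = f * g := by
  simp [moyal, Pr]

lemma constantCoeff_sun0 (f g : N) :
    PowerSeries.constantCoeff (R := N) (sun0 f g) = f * g := by
  induction f using MvPolynomial.induction_on' with
  | add f f' hf hf' => rw [sun0_add_left, map_add, hf, hf', add_mul]
  | monomial a c =>
    induction g using MvPolynomial.induction_on' with
    | add g g' hg hg' => rw [sun0_add_right, map_add, hg, hg', mul_add]
    | monomial b d =>
      rw [sun0_monomial, PowerSeries.constantCoeff_smul, constantCoeff_moyal, monomial_mul,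
        monomial_eq, Finsupp.prod_fintype _ _ fun _ => pow_zero _, Fin.prod_univ_two,
        smul_eq_C_mul]
      simp [pow_add]

/-- The sun product is commutative and associative. -/
theorem sun_comm_assoc :
    (∀ A B : PowerSeries N, sun A B = sun B A)
    ∧ (∀ A B C : PowerSeries N, sun (sun A B) C = sun A (sun B C)) := by
  refine ⟨fun A B => ?_, fun A B C => ?_⟩
  · rw [sun, sun, sun0_eq_sun0_mul_one, mul_comm, ← sun0_eq_sun0_mul_one]
  · rw [sun, sun, sun, sun, constantCoeff_sun0, constantCoeff_sun0, sun0_eq_sun0_mul_one,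
      mul_assoc, ← sun0_eq_sun0_mul_one]
end
end
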